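/- arXiv:2009.01995 — 5 statements merged into one kernel-verified Lean document; each statement's English description precedes it below -/
import Mathlib

section
/- Let Y be a real-valued random variable, D a random variable taking values in a finite ordered set 𝒟 with maximum d_max, and Z a random variable with values in {z_1,...,z_K}. Suppose there exist potential outcomes Y_d (d ∈ 𝒟) and potential treatments D_{z_k} (k = 1,...,K) such that (i) Y = Y_d on the event {D = d}, and D = D_{z_k} on {Z = z_k}; (ii) Z is jointly independent of (Y_{d_1},...,Y_{d_J}, D_{z_1},...,D_{z_K}); (iii) D_{z_{k+1}} ≥ D_{z_k} almost surely for all k. Then for every Borel set B ⊆ ℝ and every k with 1 ≤ k ≤ K−1, P(Y ∈ B, D = d_max | Z = z_k) ≤ P(Y ∈ B, D = d_max | Z = z_{k+1}). -/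
/-!
On `{Z = z_k}` the event `{Y ∈ B, D = d_max}` coincides with `{Y_{d_max} ∈ B, D_{z_k} = d_max}`,
and the latter is independent of `Z`, so conditioning on `Z = z_k` does not change its
probability. Since `d_max` is the largest treatment, monotonicity gives
`{D_{z_k} = d_max} ⊆ {D_{z_{k+1}} = d_max}` almost surely.
-/

open MeasureTheory ProbabilityTheory Filter

namespace ProbabilityTheory

variable {Ω ι α δ : Type*}

theorem preimage_singleton_inter_outcome_treatment_eq {Y : Ω → α} {D : Ω → δ} {Z : Ω → ι}
    {Yd : δ → Ω → α} {Dz : ι → Ω → δ} (hexcl : ∀ ω, Y ω = Yd (D ω) ω)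
    (hDz : ∀ ω, D ω = Dz (Z ω) ω) (j : ι) (B : Set α) (d : δ) :
    Z ⁻¹' {j} ∩ {ω | Y ω ∈ B ∧ D ω = d} = Z ⁻¹' {j} ∩ {ω | Yd d ω ∈ B ∧ Dz j ω = d} := by
  ext ω
  simp only [Set.mem_inter_iff, Set.mem_preimage, Set.mem_singleton_iff, Set.mem_ofPred_eq,
    and_congr_right_iff]
  intro hZω
  rw [hexcl, hDz, hZω]
  constructor <;> rintro ⟨hB, rfl⟩ <;> exact ⟨hB, rfl⟩

variable [MeasurableSpace Ω] {μ : Measure Ω}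

theorem IndepFun.cond_preimage_apply_preimage {β γ : Type*} [MeasurableSpace β]
    [MeasurableSpace γ] [IsFiniteMeasure μ] {Z : Ω → β} {X : Ω → γ} (hZX : IndepFun Z X μ)
    (hZ : Measurable Z) {T : Set β} (hT : MeasurableSet T) (hZT : μ (Z ⁻¹' T) ≠ 0)
    {S : Set γ} (hS : MeasurableSet S) :
    μ[X ⁻¹' S | Z ⁻¹' T] = μ (X ⁻¹' S) := by
  rw [cond_apply (hZ hT), hZX.measure_inter_preimage_eq_mul T S hT hS, ← mul_assoc,
    ENNReal.inv_mul_cancel hZT (measure_ne_top _ _), one_mul]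

theorem cond_outcome_treatment_eq [MeasurableSpace ι] [MeasurableSingletonClass ι]
    [MeasurableSpace α] [MeasurableSpace δ] [MeasurableSingletonClass δ] [IsFiniteMeasure μ]
    {Y : Ω → α} {D : Ω → δ} {Z : Ω → ι} {Yd : δ → Ω → α} {Dz : ι → Ω → δ}
    (hZ : Measurable Z) (hexcl : ∀ ω, Y ω = Yd (D ω) ω) (hDz : ∀ ω, D ω = Dz (Z ω) ω)
    (hindep : IndepFun Z (fun ω => ((fun d => Yd d ω), (fun k => Dz k ω))) μ)
    {j : ι} (hj : μ (Z ⁻¹' {j}) ≠ 0) {B : Set α} (hB : MeasurableSet B) (d : δ) :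
    μ[{ω | Y ω ∈ B ∧ D ω = d} | Z ⁻¹' {j}] = μ {ω | Yd d ω ∈ B ∧ Dz j ω = d} := by
  have hZj : MeasurableSet (Z ⁻¹' {j}) := hZ (measurableSet_singleton j)
  have hS : MeasurableSet {p : (δ → α) × (ι → δ) | p.1 d ∈ B ∧ p.2 j = d} :=
    (hB.preimage ((measurable_pi_apply d).comp measurable_fst)).inter
      ((measurableSet_singleton d).preimage ((measurable_pi_apply j).comp measurable_snd))
  rw [← cond_inter_self hZj, preimage_singleton_inter_outcome_treatment_eq hexcl hDz,
    cond_inter_self hZj]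
  exact hindep.cond_preimage_apply_preimage hZ (measurableSet_singleton j) hj hS

theorem setOf_eq_ae_le_setOf_eq_of_ae_le [PartialOrder δ] {f g : Ω → δ} {m : δ}
    (hfg : f ≤ᵐ[μ] g) (hg : ∀ ω, g ω ≤ m) : {ω | f ω = m} ≤ᵐ[μ] {ω | g ω = m} := by
  filter_upwards [hfg] with ω hω hfω
  exact le_antisymm (hg ω) (hfω ▸ hω)

end ProbabilityTheory

theorem stmt0_general
    {Ω : Type*} [MeasurableSpace Ω] (μ : Measure Ω) [IsProbabilityMeasure μ]
    (K : ℕ)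
    (𝒟 : Finset ℝ) (dmax : ℝ) (hdmax : ∀ d ∈ 𝒟, d ≤ dmax)
    (Y D : Ω → ℝ) (Z : Ω → Fin K)
    (Yd : ℝ → Ω → ℝ) (Dz : Fin K → Ω → ℝ)
    (hZmeas : Measurable Z)
    (hDrange : ∀ k ω, Dz k ω ∈ 𝒟)
    -- instrument exclusion: Y = Y_d on the event {D = d}
    (hexcl : ∀ ω, Y ω = Yd (D ω) ω)
    -- potential treatments: D = D_{z_k} on the event {Z = z_k}
    (hDz : ∀ ω, D ω = Dz (Z ω) ω)
    -- random assignment: Z is jointly independent of all potential outcomes/treatments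
    (hindep : IndepFun Z
      (fun ω => ((fun d : ℝ => Yd d ω), (fun k : Fin K => Dz k ω))) μ)
    -- instrument monotonicity
    (hmono : ∀ (k : Fin K) (hk : (k : ℕ) + 1 < K),
      ∀ᵐ ω ∂μ, Dz k ω ≤ Dz ⟨(k : ℕ) + 1, hk⟩ ω)
    -- every instrument level has positive probability
    (hpos : ∀ k : Fin K, 0 < μ (Z ⁻¹' {k}))
    (B : Set ℝ) (hB : MeasurableSet B)
    (k : Fin K) (hk : (k : ℕ) + 1 < K) :
    μ[|Z ⁻¹' {k}] {ω | Y ω ∈ B ∧ D ω = dmax}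
      ≤ μ[|Z ⁻¹' {(⟨(k : ℕ) + 1, hk⟩ : Fin K)}] {ω | Y ω ∈ B ∧ D ω = dmax} := by
  simp only [cond_outcome_treatment_eq hZmeas hexcl hDz hindep (hpos _).ne' hB]
  exact measure_mono_ae <| (EventuallyLE.refl _ _).inter <|
    setOf_eq_ae_le_setOf_eq_of_ae_le (hmono k hk) fun ω => hdmax _ (hDrange _ ω)

/-- Testable implication of IV validity for a multivalued ordered treatment:
the conditional probability of `{Y ∈ B, D = d_max}` is nondecreasing in the
instrument level. -/
theorem stmt0
    {Ω : Type*} [MeasurableSpace Ω] (μ : Measure Ω) [IsProbabilityMeasure μ]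
    (K : ℕ) (hK : 2 ≤ K)
    (𝒟 : Finset ℝ) (dmax : ℝ) (hdmax_mem : dmax ∈ 𝒟) (hdmax : ∀ d ∈ 𝒟, d ≤ dmax)
    (Y D : Ω → ℝ) (Z : Ω → Fin K)
    (Yd : ℝ → Ω → ℝ) (Dz : Fin K → Ω → ℝ)
    (hYmeas : Measurable Y) (hDmeas : Measurable D) (hZmeas : Measurable Z)
    (hYdmeas : ∀ d, Measurable (Yd d)) (hDzmeas : ∀ k, Measurable (Dz k))
    (hDrange : ∀ k ω, Dz k ω ∈ 𝒟)
    -- instrument exclusion: Y = Y_d on the event {D = d}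
    (hexcl : ∀ ω, Y ω = Yd (D ω) ω)
    -- potential treatments: D = D_{z_k} on the event {Z = z_k}
    (hDz : ∀ ω, D ω = Dz (Z ω) ω)
    -- random assignment: Z is jointly independent of all potential outcomes/treatments
    (hindep : IndepFun Z
      (fun ω => ((fun d : ℝ => Yd d ω), (fun k : Fin K => Dz k ω))) μ)
    -- instrument monotonicity
    (hmono : ∀ (k : Fin K) (hk : (k : ℕ) + 1 < K),
      ∀ᵐ ω ∂μ, Dz k ω ≤ Dz ⟨(k : ℕ) + 1, hk⟩ ω)
    -- every instrument level has positive probability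
    (hpos : ∀ k : Fin K, 0 < μ (Z ⁻¹' {k}))
    (B : Set ℝ) (hB : MeasurableSet B)
    (k : Fin K) (hk : (k : ℕ) + 1 < K) :
    μ[|Z ⁻¹' {k}] {ω | Y ω ∈ B ∧ D ω = dmax}
      ≤ μ[|Z ⁻¹' {(⟨(k : ℕ) + 1, hk⟩ : Fin K)}] {ω | Y ω ∈ B ∧ D ω = dmax} :=
  stmt0_general μ K 𝒟 dmax hdmax Y D Z Yd Dz hZmeas hDrange hexcl hDz hindep hmono hpos B hB k hk
end

section
/- Under the same setup as the previous statement but with d_min the minimum value of 𝒟, for every Borel set B ⊆ ℝ and every k with 1 ≤ k ≤ K−1, P(Y ∈ B, D = d_min | Z = z_k) ≥ P(Y ∈ B, D = d_min | Z = z_{k+1}). -/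
/-!
On `{Z = z_j}` the event `{Y ∈ B, D = d_min}` coincides with
`{Y_{d_min} ∈ B, D_{z_j} = d_min}`, an event defined by the potential variables alone, so by
random assignment its conditional probability given `Z = z_j` is its unconditional probability.
Since `d_min` is the least treatment value, monotonicity `D_{z_k} ≤ D_{z_{k+1}}` turns
`D_{z_{k+1}} = d_min` into `D_{z_k} = d_min`, and the inequality follows by monotonicity of `ℙ`.
-/

open MeasureTheory ProbabilityTheory

namespace ProbabilityTheory

variable {Ω α β : Type*} [MeasurableSpace Ω] [MeasurableSpace α] [MeasurableSpace β]
  {μ : Measure Ω} {s t t' : Set Ω}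

theorem cond_congr_of_inter_eq (hs : MeasurableSet s) (h : s ∩ t = s ∩ t') :
    μ[t | s] = μ[t' | s] := by
  rw [← cond_inter_self hs, h, cond_inter_self hs]

theorem IndepFun.cond_apply_preimage [IsFiniteMeasure μ] {Z : Ω → α} {W : Ω → β}
    (hindep : IndepFun Z W μ) (hZ : Measurable Z) {S : Set α} (hS : MeasurableSet S)
    (hS₀ : μ (Z ⁻¹' S) ≠ 0) {T : Set β} (hT : MeasurableSet T) :
    μ[W ⁻¹' T | Z ⁻¹' S] = μ (W ⁻¹' T) := by
  rw [cond_apply (hZ hS), hindep.measure_inter_preimage_eq_mul _ _ hS hT, ← mul_assoc,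
    ENNReal.inv_mul_cancel hS₀ (measure_ne_top μ _), one_mul]

end ProbabilityTheory

theorem stmt1_general
    {Ω : Type*} [MeasurableSpace Ω] (μ : Measure Ω) [IsProbabilityMeasure μ]
    (K : ℕ)
    (𝒟 : Finset ℝ) (dmin : ℝ) (hdmin : ∀ d ∈ 𝒟, dmin ≤ d)
    (Y D : Ω → ℝ) (Z : Ω → Fin K)
    (Yd : ℝ → Ω → ℝ) (Dz : Fin K → Ω → ℝ)
    (hZmeas : Measurable Z)
    (hDrange : ∀ k ω, Dz k ω ∈ 𝒟)
    -- instrument exclusion: Y = Y_d on the event {D = d}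
    (hexcl : ∀ ω, Y ω = Yd (D ω) ω)
    -- potential treatments: D = D_{z_k} on the event {Z = z_k}
    (hDz : ∀ ω, D ω = Dz (Z ω) ω)
    -- random assignment: Z is jointly independent of all potential outcomes/treatments
    (hindep : IndepFun Z
      (fun ω => ((fun d : ℝ => Yd d ω), (fun k : Fin K => Dz k ω))) μ)
    -- instrument monotonicity
    (hmono : ∀ (k : Fin K) (hk : (k : ℕ) + 1 < K),
      ∀ᵐ ω ∂μ, Dz k ω ≤ Dz ⟨(k : ℕ) + 1, hk⟩ ω)
    -- every instrument level has positive probability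
    (hpos : ∀ k : Fin K, 0 < μ (Z ⁻¹' {k}))
    (B : Set ℝ) (hB : MeasurableSet B)
    (k : Fin K) (hk : (k : ℕ) + 1 < K) :
    μ[|Z ⁻¹' {(⟨(k : ℕ) + 1, hk⟩ : Fin K)}] {ω | Y ω ∈ B ∧ D ω = dmin}
      ≤ μ[|Z ⁻¹' {k}] {ω | Y ω ∈ B ∧ D ω = dmin} := by
  let A (j : Fin K) : Set ((ℝ → ℝ) × (Fin K → ℝ)) := {p | p.1 dmin ∈ B ∧ p.2 j = dmin}
  have hA (j : Fin K) : MeasurableSet (A j) :=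
    (measurableSet_preimage (by fun_prop) hB).inter
      (measurableSet_preimage (by fun_prop) (measurableSet_singleton dmin))
  have hcond (j : Fin K) : μ[{ω | Y ω ∈ B ∧ D ω = dmin} | Z ⁻¹' {j}] =
      μ {ω | Yd dmin ω ∈ B ∧ Dz j ω = dmin} := by
    rw [cond_congr_of_inter_eq (hZmeas (measurableSet_singleton j)) (t' := _ ⁻¹' A j),
      hindep.cond_apply_preimage hZmeas (measurableSet_singleton j) (hpos j).ne' (hA j)]
    · rfl
    ext ω
    refine and_congr_right fun hZω => ?_
    rw [Set.mem_ofPred_eq, hexcl, hDz, hZω]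
    exact and_congr_left fun hd => by rw [hd]
  rw [hcond, hcond]
  refine measure_mono_ae ?_
  filter_upwards [hmono k hk] with ω hω
  rintro ⟨hy, hd⟩
  exact ⟨hy, le_antisymm (hd ▸ hω) (hdmin _ (hDrange k ω))⟩

/-- Testable implication of IV validity for a multivalued ordered treatment:
the conditional probability of `{Y ∈ B, D = d_min}` is nonincreasing in the
instrument level. -/
theorem stmt1
    {Ω : Type*} [MeasurableSpace Ω] (μ : Measure Ω) [IsProbabilityMeasure μ]
    (K : ℕ) (hK : 2 ≤ K)
    (𝒟 : Finset ℝ) (dmin : ℝ) (hdmin_mem : dmin ∈ 𝒟) (hdmin : ∀ d ∈ 𝒟, dmin ≤ d)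
    (Y D : Ω → ℝ) (Z : Ω → Fin K)
    (Yd : ℝ → Ω → ℝ) (Dz : Fin K → Ω → ℝ)
    (hYmeas : Measurable Y) (hDmeas : Measurable D) (hZmeas : Measurable Z)
    (hYdmeas : ∀ d, Measurable (Yd d)) (hDzmeas : ∀ k, Measurable (Dz k))
    (hDrange : ∀ k ω, Dz k ω ∈ 𝒟)
    -- instrument exclusion: Y = Y_d on the event {D = d}
    (hexcl : ∀ ω, Y ω = Yd (D ω) ω)
    -- potential treatments: D = D_{z_k} on the event {Z = z_k}
    (hDz : ∀ ω, D ω = Dz (Z ω) ω)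
    -- random assignment: Z is jointly independent of all potential outcomes/treatments
    (hindep : IndepFun Z
      (fun ω => ((fun d : ℝ => Yd d ω), (fun k : Fin K => Dz k ω))) μ)
    -- instrument monotonicity
    (hmono : ∀ (k : Fin K) (hk : (k : ℕ) + 1 < K),
      ∀ᵐ ω ∂μ, Dz k ω ≤ Dz ⟨(k : ℕ) + 1, hk⟩ ω)
    -- every instrument level has positive probability
    (hpos : ∀ k : Fin K, 0 < μ (Z ⁻¹' {k}))
    (B : Set ℝ) (hB : MeasurableSet B)
    (k : Fin K) (hk : (k : ℕ) + 1 < K) :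
    μ[|Z ⁻¹' {(⟨(k : ℕ) + 1, hk⟩ : Fin K)}] {ω | Y ω ∈ B ∧ D ω = dmin}
      ≤ μ[|Z ⁻¹' {k}] {ω | Y ω ∈ B ∧ D ω = dmin} :=
  stmt1_general μ K 𝒟 dmin hdmin Y D Z Yd Dz hZmeas hDrange hexcl hDz hindep hmono hpos B hB k hk
end

section
/- Let Q be a probability measure on ℝ³ and let 𝓗_{1d} = {(−1)^d·1_{B×{d}×ℝ} : B a closed interval in ℝ} for fixed d ∈ {0,1}. Then the closure of 𝓗_{1d} in L²(Q) is contained in 𝓗̄_{1d} = {(−1)^d·1_{B×{d}×ℝ} : B a closed, open, or half-closed interval in ℝ}; i.e., every L²(Q)-limit of a sequence in 𝓗_{1d} equals (−1)^d·1_{B×{d}×ℝ} Q-a.e. for some interval B. -/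
open MeasureTheory Filter

/-- The function `(-1)^d · 1_{B × {d} × ℝ}` for a set `B ⊆ ℝ`. -/
noncomputable def H1funSet (B : Set ℝ) (d : Fin 2) : ℝ × ℝ × ℝ → ℝ :=
  fun p => (-1 : ℝ) ^ (d : ℕ) *
    Set.indicator (B ×ˢ ({((d : ℕ) : ℝ)} ×ˢ (Set.univ : Set ℝ)))
      (fun _ => (1 : ℝ)) p

/-! L² convergence gives an a.e. convergent subsequence, and a pointwise limit of
indicators `b · 1_{sₙ}(x)` is `b · 1_{liminf sₙ}(x)`: either `x ∈ sₙ` eventually, or the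
values `0` occur frequently. The liminf of intervals is an interval, since two points of
it lie together in `sₙ` for all large `n`. -/

theorem Set.OrdConnected.liminf {ι α : Type*} [Preorder α] {s : ι → Set α} {L : Filter ι}
    (hs : ∀ i, (s i).OrdConnected) : (liminf s L).OrdConnected := by
  refine ⟨fun x hx y hy z hz => mem_liminf_iff_eventually_mem.2 ?_⟩
  filter_upwards [mem_liminf_iff_eventually_mem.1 hx, mem_liminf_iff_eventually_mem.1 hy]
    with i hxi hyi
  exact (hs i).out hxi hyi hz

theorem Filter.liminf_prod_const {ι α β : Type*} {s : ι → Set α} (t : Set β)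
    (L : Filter ι) [L.NeBot] :
    liminf (fun i => s i ×ˢ t) L = liminf s L ×ˢ t := by
  ext p
  simp only [mem_liminf_iff_eventually_mem, Set.mem_prod, eventually_and, eventually_const]

theorem Filter.Tendsto.eq_indicator_const_liminf {ι α β : Type*} [Zero β] [TopologicalSpace β]
    [T2Space β] {s : ι → Set α} {L : Filter ι} [L.NeBot] {b y : β} {x : α}
    (h : Tendsto (fun i => (s i).indicator (fun _ => b) x) L (nhds y)) :
    y = (liminf s L).indicator (fun _ => b) x := by
  by_cases hx : ∀ᶠ i in L, x ∈ s i
  · rw [Set.indicator_of_mem (mem_liminf_iff_eventually_mem.2 hx)]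
    refine tendsto_nhds_unique h (tendsto_const_nhds.congr' ?_)
    filter_upwards [hx] with i hi
    rw [Set.indicator_of_mem hi]
  · rw [Set.indicator_of_notMem (mt mem_liminf_iff_eventually_mem.1 hx)]
    have hzero : ∃ᶠ i in L, (s i).indicator (fun _ => b) x ∈ ({0} : Set β) :=
      (not_eventually.1 hx).mono fun i hi => Set.indicator_of_notMem hi _
    exact isClosed_singleton.mem_of_frequently_of_tendsto hzero h

theorem tendsto_eLpNorm_two_of_tendsto_integral_sq {ι α : Type*} [MeasurableSpace α]
    {μ : Measure α} {L : Filter ι} {g : ι → α → ℝ} (hg : ∀ i, MemLp (g i) 2 μ)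
    (h : Tendsto (fun i => ∫ x, g i x ^ 2 ∂μ) L (nhds 0)) :
    Tendsto (fun i => eLpNorm (g i) 2 μ) L (nhds 0) := by
  have heq : ∀ i, eLpNorm (g i) 2 μ = ENNReal.ofReal ((∫ x, g i x ^ 2 ∂μ) ^ (2⁻¹ : ℝ)) := by
    intro i
    rw [(hg i).eLpNorm_eq_integral_rpow_norm two_ne_zero ENNReal.ofNat_ne_top]
    simp [Real.norm_eq_abs, sq_abs]
  simp_rw [heq]
  simpa using (ENNReal.tendsto_ofReal (h.rpow_const (Or.inr (by norm_num : (0 : ℝ) ≤ 2⁻¹))))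

theorem H1funSet_eq_indicator (B : Set ℝ) (d : Fin 2) :
    H1funSet B d = (B ×ˢ ({((d : ℕ) : ℝ)} ×ˢ Set.univ)).indicator fun _ => (-1 : ℝ) ^ (d : ℕ) := by
  ext p
  rw [H1funSet, ← Set.indicator_mul_right (f := fun _ => (-1 : ℝ) ^ (d : ℕ)), mul_one]

theorem memLp_H1funSet {Q : Measure (ℝ × ℝ × ℝ)} [IsFiniteMeasure Q] {B : Set ℝ}
    (hB : MeasurableSet B) (d : Fin 2) (p : ENNReal) : MemLp (H1funSet B d) p Q := by
  rw [H1funSet_eq_indicator]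
  exact memLp_indicator_const p (hB.prod ((measurableSet_singleton _).prod .univ)) _
    (Or.inr (measure_ne_top Q _))

theorem Filter.Tendsto.eq_H1funSet_liminf {ι : Type*} {s : ι → Set ℝ} {L : Filter ι} [L.NeBot]
    {d : Fin 2} {p : ℝ × ℝ × ℝ} {y : ℝ} (h : Tendsto (fun i => H1funSet (s i) d p) L (nhds y)) :
    y = H1funSet (liminf s L) d p := by
  simp only [H1funSet_eq_indicator] at h ⊢
  rw [← Filter.liminf_prod_const]
  exact h.eq_indicator_const_liminf

theorem stmt8_general
    (d : Fin 2) (Q : Measure (ℝ × ℝ × ℝ)) [IsProbabilityMeasure Q]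
    (a b : ℕ → ℝ)
    (f : ℝ × ℝ × ℝ → ℝ) (hf2 : MemLp f 2 Q)
    (hconv : Tendsto
      (fun n => ∫ p, (H1funSet (Set.Icc (a n) (b n)) d p - f p) ^ 2 ∂Q)
      atTop (nhds 0)) :
    ∃ B : Set ℝ, B.OrdConnected ∧ MeasurableSet B ∧
      f =ᵐ[Q] H1funSet B d := by
  set I : ℕ → Set ℝ := fun n => Set.Icc (a n) (b n)
  have hL2 : Tendsto (fun n => eLpNorm (H1funSet (I n) d - f) 2 Q) atTop (nhds 0) :=
    tendsto_eLpNorm_two_of_tendsto_integral_sq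
      (fun n => (memLp_H1funSet measurableSet_Icc d 2).sub hf2) hconv
  obtain ⟨ns, -, hae⟩ := (tendstoInMeasure_of_tendsto_eLpNorm two_ne_zero
    (fun n => (memLp_H1funSet measurableSet_Icc d 2).aestronglyMeasurable)
    hf2.aestronglyMeasurable hL2).exists_seq_tendsto_ae
  refine ⟨liminf (I ∘ ns) atTop, Set.OrdConnected.liminf fun _ => Set.ordConnected_Icc,
    MeasurableSet.measurableSet_liminf fun _ => measurableSet_Icc, ?_⟩
  filter_upwards [hae] with p hp
  exact hp.eq_H1funSet_liminf

/-- Every `L²(Q)`-limit of a sequence of functions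
`(-1)^d · 1_{[aₙ,bₙ]×{d}×ℝ}` (closed intervals) is `Q`-a.e. equal to
`(-1)^d · 1_{B×{d}×ℝ}` for some interval `B` (closed, open, or half-closed,
i.e. an order-connected subset of `ℝ`). -/
theorem stmt8
    (d : Fin 2) (Q : Measure (ℝ × ℝ × ℝ)) [IsProbabilityMeasure Q]
    (a b : ℕ → ℝ) (hab : ∀ n, a n ≤ b n)
    (f : ℝ × ℝ × ℝ → ℝ) (hf : Measurable f) (hf2 : MemLp f 2 Q)
    (hconv : Tendsto
      (fun n => ∫ p, (H1funSet (Set.Icc (a n) (b n)) d p - f p) ^ 2 ∂Q)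
      atTop (nhds 0)) :
    ∃ B : Set ℝ, B.OrdConnected ∧ MeasurableSet B ∧
      f =ᵐ[Q] H1funSet B d :=
  stmt8_general d Q a b f hf2 hconv
end

section
/- Let (𝔻,d) and (𝔼,e) be metric spaces, 𝔻₀ ⊆ 𝔻, and let X_n : Ω → 𝔻 be maps converging in outer probability to a Borel measurable, separable X taking values in 𝔻₀. Let 𝔻_n ⊆ 𝔻 with X_n(ω) ∈ 𝔻_n for all ω, n, and let g_n be random maps g_n(ω): 𝔻_n → 𝔼 such that: for every ε > 0 there is a measurable A ⊆ Ω with ℙ(A) ≥ 1−ε such that whenever x_n → x with x_n ∈ 𝔻_n and x ∈ 𝔻₀, sup_{ω∈A} e(g_n(ω)(x_n), g(x)) → 0, for a fixed map g: 𝔻₀ → 𝔼. Then g is continuous on 𝔻₀ ∩ 𝔻_∞ (where 𝔻_∞ is the set of limits of sequences x_n ∈ 𝔻_n), and g_n(X_n) converges to g(X) in outer probability. -/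
/-!
The law of a separable random element charges only points all of whose balls have positive
mass, and convergence in probability makes every such point a limit of points `xₙ ∈ 𝔻ₙ`; so `X`
lies almost surely in `S = 𝔻₀ ∩ 𝔻_∞`. At `x ∈ S` the hypothesis along sequences upgrades, by
interleaving a bad subsequence into a sequence converging to `x`, to: `gₘ(ω)(z)` is uniformly
close to `g x` for `ω ∈ A`, `m` large and `z ∈ 𝔻ₘ` near `x`. Comparing `g` at two nearby points
of `S` through one such value gives continuity of `g` on `S`.

For the second part, the sets `B_k` of points `x` admitting `m ≥ k`, `z ∈ 𝔻ₘ` within `1/(k+1)`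
of `x` and `ω ∈ A` with `e(gₘ(ω)(z), g x) > ε/2` decrease, are relatively open in `S` (continuity
of `g`) and have no common point in `S`. Hence `ℙ*(X ∈ B_k) → 0`, and `e(gₙ(ω)(Xₙ ω), g (X ω)) < ε`
unless `ω ∉ A`, `d(Xₙ ω, X ω) ≥ 1/(k+1)` or `X ω ∈ B_k`.
-/

open MeasureTheory Filter Topology Metric Set
open scoped ENNReal

section

variable {Ω 𝔻 𝔼 : Type*}

def seqLimits [TopologicalSpace 𝔻] (Dn : ℕ → Set 𝔻) : Set 𝔻 :=
  {x | ∃ xs : ℕ → 𝔻, (∀ n, xs n ∈ Dn n) ∧ Tendsto xs atTop (𝓝 x)}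

theorem exists_seq_mem_tendsto_of_subseq [TopologicalSpace 𝔻] {Dn : ℕ → Set 𝔻}
    {xs : ℕ → 𝔻} {x : 𝔻} (hxs : ∀ n, xs n ∈ Dn n) (hx : Tendsto xs atTop (𝓝 x))
    {m : ℕ → ℕ} (hm : StrictMono m) {y : ℕ → 𝔻} (hy : ∀ i, y i ∈ Dn (m i))
    (hyx : Tendsto y atTop (𝓝 x)) :
    ∃ w : ℕ → 𝔻, (∀ n, w n ∈ Dn n) ∧ Tendsto w atTop (𝓝 x) ∧ ∀ i, w (m i) = y i := by
  refine ⟨Function.extend m y xs, fun n => ?_, ?_, hm.injective.extend_apply y xs⟩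
  · by_cases h : ∃ i, m i = n
    · obtain ⟨i, rfl⟩ := h
      rw [hm.injective.extend_apply]
      exact hy i
    · rw [Function.extend_apply' _ _ _ h]
      exact hxs n
  · refine tendsto_iff_forall_eventually_mem.2 fun U hU => ?_
    obtain ⟨N, hN⟩ := eventually_atTop.1 (hx.eventually_mem hU)
    obtain ⟨I, hI⟩ := eventually_atTop.1 (hyx.eventually_mem hU)
    refine eventually_atTop.2 ⟨max N (m I), fun n hn => ?_⟩
    by_cases h : ∃ i, m i = n
    · obtain ⟨i, rfl⟩ := h
      rw [hm.injective.extend_apply]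
      exact hI i (hm.le_iff_le.1 (le_of_max_le_right hn))
    · rw [Function.extend_apply' _ _ _ h]
      exact hN n (le_of_max_le_left hn)

section Metric

variable [PseudoMetricSpace 𝔻] [PseudoMetricSpace 𝔼] {Dn : ℕ → Set 𝔻}

theorem mem_seqLimits_of_forall_eventually {x : 𝔻} (hne : ∀ n, (Dn n).Nonempty)
    (h : ∀ r > 0, ∀ᶠ n in atTop, ∃ z ∈ Dn n, dist x z < r) : x ∈ seqLimits Dn := by
  have hinf : Tendsto (fun n => infDist x (Dn n)) atTop (𝓝 0) := by
    refine Metric.tendsto_nhds.2 fun r hr => ?_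
    filter_upwards [h r hr] with n hn
    rw [Real.dist_0_eq_abs, abs_of_nonneg infDist_nonneg]
    exact (infDist_lt_iff (hne n)).2 hn
  choose z hz hzx using fun n : ℕ => (infDist_lt_iff (hne n)).1
    (lt_add_of_pos_right (infDist x (Dn n)) (Nat.one_div_pos_of_nat (n := n)))
  refine ⟨z, hz, tendsto_iff_dist_tendsto_zero.2 (squeeze_zero (fun _ => dist_nonneg)
    (fun n => (dist_comm (z n) x).trans_le (hzx n).le) ?_)⟩
  simpa using hinf.add tendsto_one_div_add_atTop_nhds_zero_nat

def TendstoUniformlyOnNear (Dn : ℕ → Set 𝔻) (gn : ℕ → Ω → 𝔻 → 𝔼) (g : 𝔻 → 𝔼) (A : Set Ω)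
    (x : 𝔻) : Prop :=
  ∀ δ > 0, ∀ᶠ p in atTop ×ˢ 𝓝 x, p.2 ∈ Dn p.1 → ∀ ω ∈ A, dist (gn p.1 ω p.2) (g x) < δ

variable {gn : ℕ → Ω → 𝔻 → 𝔼} {g : 𝔻 → 𝔼} {A : Set Ω}

theorem tendstoUniformlyOnNear_of_tendsto_seq {x : 𝔻} (hx : x ∈ seqLimits Dn)
    (hA : ∀ w : ℕ → 𝔻, (∀ n, w n ∈ Dn n) → Tendsto w atTop (𝓝 x) →
      ∀ δ > 0, ∀ᶠ n in atTop, ∀ ω ∈ A, dist (gn n ω (w n)) (g x) < δ) :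
    TendstoUniformlyOnNear Dn gn g A x := by
  obtain ⟨xs, hxs, hxsx⟩ := hx
  intro δ hδ
  by_contra h
  obtain ⟨p, hp, hbad⟩ := exists_seq_forall_of_frequently (not_eventually.1 h)
  simp only [Classical.not_imp, not_forall, not_lt] at hbad
  obtain ⟨φ, hφ, hmφ⟩ := strictMono_subseq_of_tendsto_atTop (tendsto_fst.comp hp)
  obtain ⟨w, hw, hwx, hwp⟩ := exists_seq_mem_tendsto_of_subseq hxs hxsx hmφ
    (y := fun i => (p (φ i)).2) (fun i => (hbad (φ i)).1)
    ((tendsto_snd.comp hp).comp hφ.tendsto_atTop)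
  obtain ⟨i, hi⟩ := (hmφ.tendsto_atTop.eventually (hA w hw hwx δ hδ)).exists
  obtain ⟨ω, hωA, hω⟩ := (hbad (φ i)).2
  rw [hwp] at hi
  exact (hi ω hωA).not_ge hω

theorem continuousOn_of_tendstoUniformlyOnNear (hA : A.Nonempty) {S : Set 𝔻}
    (hS : S ⊆ seqLimits Dn) (hloc : ∀ x ∈ S, TendstoUniformlyOnNear Dn gn g A x) :
    ContinuousOn g S := by
  obtain ⟨ω, hω⟩ := hA
  intro x hx
  refine Metric.tendsto_nhds.2 fun ε hε => ?_
  obtain ⟨P, hP, Q, hQ, hPQ⟩ := eventually_prod_iff.1 (hloc x hx (ε / 2) (half_pos hε))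
  filter_upwards [self_mem_nhdsWithin, nhdsWithin_le_nhds (eventually_eventually_nhds.2 hQ)]
    with v hvS hvQ
  obtain ⟨vs, hvs, hvsv⟩ := hS hvS
  obtain ⟨n, hPn, hQn, hvn⟩ := (hP.and ((hvsv.eventually hvQ).and
    ((tendsto_id.prodMk hvsv).eventually (hloc v hvS (ε / 2) (half_pos hε))))).exists
  calc dist (g v) (g x) ≤ dist (gn n ω (vs n)) (g v) + dist (gn n ω (vs n)) (g x) :=
        dist_triangle_left _ _ _
    _ < ε / 2 + ε / 2 := add_lt_add (hvn (hvs n) ω hω) (hPQ hPn hQn (hvs n) ω hω)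
    _ = ε := add_halves ε

def deviationSet (Dn : ℕ → Set 𝔻) (gn : ℕ → Ω → 𝔻 → 𝔼) (g : 𝔻 → 𝔼) (A : Set Ω) (δ : ℝ)
    (k : ℕ) : Set 𝔻 :=
  {x | ∃ m ≥ k, ∃ z ∈ Dn m, dist x z < 1 / (k + 1) ∧ ∃ ω ∈ A, δ < dist (gn m ω z) (g x)}

variable {δ : ℝ}

theorem deviationSet_antitone : Antitone (deviationSet Dn gn g A δ) :=
  fun _ _ hk _ ⟨m, hm, z, hz, hxz, hω⟩ =>
    ⟨m, hk.trans hm, z, hz, hxz.trans_le (Nat.one_div_le_one_div hk), hω⟩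

theorem deviationSet_mem_nhdsWithin {S : Set 𝔻} (hg : ContinuousOn g S) {x : 𝔻} (hx : x ∈ S)
    {k : ℕ} (hxk : x ∈ deviationSet Dn gn g A δ k) : deviationSet Dn gn g A δ k ∈ 𝓝[S] x := by
  obtain ⟨m, hm, z, hz, hxz, ω, hω, hδ⟩ := hxk
  have hball : ∀ᶠ y in 𝓝[S] x, dist y z < 1 / (k + 1) :=
    nhdsWithin_le_nhds (isOpen_ball.mem_nhds hxz)
  have hfar : ∀ᶠ y in 𝓝[S] x, δ < dist (gn m ω z) (g y) :=
    (tendsto_const_nhds.dist (hg x hx)).eventually_const_lt hδ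
  filter_upwards [hball, hfar] with y hy hy' using ⟨m, hm, z, hz, hy, ω, hω, hy'⟩

theorem eventually_notMem_deviationSet {x : 𝔻} (hloc : TendstoUniformlyOnNear Dn gn g A x)
    (hδ : 0 < δ) : ∀ᶠ k in atTop, x ∉ deviationSet Dn gn g A δ k := by
  obtain ⟨P, hP, Q, hQ, hPQ⟩ := eventually_prod_iff.1 (hloc δ hδ)
  obtain ⟨K, hK⟩ := eventually_atTop.1 hP
  obtain ⟨r, hr, hQr⟩ := Metric.eventually_nhds_iff.1 hQ
  filter_upwards [eventually_ge_atTop K,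
    tendsto_one_div_add_atTop_nhds_zero_nat.eventually_lt_const hr] with k hk hkr
  rintro ⟨m, hm, z, hz, hxz, ω, hω, hδ⟩
  have hzx : dist z x < r := (dist_comm z x).trans_lt (hxz.trans hkr)
  exact (hPQ (hK m (hk.trans hm)) (hQr hzx) hz ω hω).not_gt hδ

end Metric

theorem tendsto_measure_preimage_of_mem_nhdsWithin [TopologicalSpace 𝔻] [MeasurableSpace 𝔻]
    [OpensMeasurableSpace 𝔻] [MeasurableSpace Ω] {μ : Measure Ω} [IsFiniteMeasure μ]
    {X : Ω → 𝔻} (hX : Measurable X) {S : Set 𝔻} (hXS : ∀ᵐ ω ∂μ, X ω ∈ S)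
    {C : ℕ → Set 𝔻} (hC : Antitone C) (hCS : ∀ k, ∀ x ∈ S, x ∈ C k → C k ∈ 𝓝[S] x)
    (hCinter : ∀ x ∈ S, ∃ k, x ∉ C k) :
    Tendsto (fun k => μ (X ⁻¹' C k)) atTop (𝓝 0) := by
  -- `interior (C k ∪ Sᶜ)` is the largest open set whose trace on `S` lies in `C k`
  set O : ℕ → Set 𝔻 := fun k => interior (C k ∪ Sᶜ)
  have hCO : ∀ k, X ⁻¹' C k ≤ᵐ[μ] X ⁻¹' O k := by
    intro k
    filter_upwards [hXS] with ω hωS hωC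
    refine mem_interior_iff_mem_nhds.2 ?_
    filter_upwards [mem_nhdsWithin_iff_eventually.1 (hCS k _ hωS hωC)] with y hy
    by_cases hyS : y ∈ S
    exacts [Or.inl (hy hyS), Or.inr hyS]
  have hOinter : μ (⋂ k, X ⁻¹' O k) = 0 := by
    refine measure_eq_zero_iff_ae_notMem.2 ?_
    filter_upwards [hXS] with ω hωS hωO
    obtain ⟨k, hk⟩ := hCinter _ hωS
    exact hk ((interior_subset (mem_iInter.1 hωO k)).resolve_right (not_not.2 hωS))
  have hO : Tendsto (fun k => μ (X ⁻¹' O k)) atTop (𝓝 0) := by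
    rw [← hOinter]
    exact tendsto_measure_iInter_atTop
      (fun k => (hX isOpen_interior.measurableSet).nullMeasurableSet)
      (fun k k' h => preimage_mono (interior_mono (union_subset_union_left _ (hC h))))
      ⟨0, measure_ne_top _ _⟩
  exact tendsto_of_tendsto_of_tendsto_of_le_of_le tendsto_const_nhds hO (fun _ => zero_le)
    fun k => measure_mono_ae (hCO k)

section Probability

variable [MeasurableSpace Ω] {μ : Measure Ω} [PseudoMetricSpace 𝔻] {X : Ω → 𝔻}

theorem ae_forall_measure_preimage_ball_ne_zero
    (hX : TopologicalSpace.IsSeparable (range X)) :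
    ∀ᵐ ω ∂μ, ∀ r > 0, μ (X ⁻¹' ball (X ω) r) ≠ 0 := by
  obtain ⟨c, hc, hXc⟩ := hX
  set N : Set (𝔻 × ℕ) := {p | p.1 ∈ c ∧ μ (X ⁻¹' ball p.1 (1 / (p.2 + 1))) = 0}
  have hN : N.Countable := (hc.prod countable_univ).mono fun _ hp => mem_prod.2 ⟨hp.1, mem_univ _⟩
  refine ae_iff.2 (measure_mono_null ?_ ((measure_biUnion_null_iff hN).2 fun p hp => hp.2))
  intro ω hω
  obtain ⟨r, hr, hω⟩ : ∃ r > 0, μ (X ⁻¹' ball (X ω) r) = 0 := by simpa using hω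
  obtain ⟨n, hn⟩ := exists_nat_one_div_lt (half_pos hr)
  obtain ⟨q, hqc, hq⟩ :=
    Metric.mem_closure_iff.1 (hXc ⟨ω, rfl⟩) _ (Nat.one_div_pos_of_nat (n := n))
  have hsub : ball q (1 / (n + 1)) ⊆ ball (X ω) r :=
    ball_subset_ball' (by rw [dist_comm]; linarith)
  exact mem_iUnion₂.2 ⟨(q, n), ⟨hqc, measure_mono_null (preimage_mono hsub) hω⟩, hq⟩

variable {Dn : ℕ → Set 𝔻} {Xn : ℕ → Ω → 𝔻}

theorem mem_seqLimits_of_measure_preimage_ball_ne_zero (hXn : ∀ n ω, Xn n ω ∈ Dn n)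
    (hconv : ∀ ε > (0 : ℝ), Tendsto (fun n => μ {ω | ε ≤ dist (Xn n ω) (X ω)}) atTop (𝓝 0))
    {x : 𝔻} (hx : ∀ r > 0, μ (X ⁻¹' ball x r) ≠ 0) : x ∈ seqLimits Dn := by
  obtain ⟨ω₀, -⟩ := nonempty_of_measure_ne_zero (hx 1 one_pos)
  refine mem_seqLimits_of_forall_eventually (fun n => ⟨_, hXn n ω₀⟩) fun r hr => ?_
  filter_upwards [(hconv (r / 2) (half_pos hr)).eventually_lt_const
    (pos_iff_ne_zero.2 (hx (r / 2) (half_pos hr)))] with n hn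
  obtain ⟨ω, hωx, hωn⟩ := not_subset.1 fun hsub => (measure_mono hsub).not_gt hn
  refine ⟨Xn n ω, hXn n ω, ?_⟩
  calc dist x (Xn n ω) ≤ dist (X ω) x + dist (X ω) (Xn n ω) := dist_triangle_left _ _ _
    _ < r / 2 + r / 2 := add_lt_add hωx (by rw [dist_comm]; exact not_le.1 hωn)
    _ = r := add_halves r

theorem ae_mem_seqLimits (hX : TopologicalSpace.IsSeparable (range X))
    (hXn : ∀ n ω, Xn n ω ∈ Dn n)
    (hconv : ∀ ε > (0 : ℝ), Tendsto (fun n => μ {ω | ε ≤ dist (Xn n ω) (X ω)}) atTop (𝓝 0)) :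
    ∀ᵐ ω ∂μ, X ω ∈ seqLimits Dn := by
  filter_upwards [ae_forall_measure_preimage_ball_ne_zero hX] with ω hω
  exact mem_seqLimits_of_measure_preimage_ball_ne_zero hXn hconv hω

variable [PseudoMetricSpace 𝔼] {gn : ℕ → Ω → 𝔻 → 𝔼} {g : 𝔻 → 𝔼} {A : Set Ω}

theorem eventually_measure_le_measure_compl_add [MeasurableSpace 𝔻] [OpensMeasurableSpace 𝔻]
    [IsFiniteMeasure μ] (hX : Measurable X) {S : Set 𝔻} (hXS : ∀ᵐ ω ∂μ, X ω ∈ S)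
    (hg : ContinuousOn g S) (hloc : ∀ x ∈ S, TendstoUniformlyOnNear Dn gn g A x)
    (hXn : ∀ n ω, Xn n ω ∈ Dn n)
    (hconv : ∀ ε > (0 : ℝ), Tendsto (fun n => μ {ω | ε ≤ dist (Xn n ω) (X ω)}) atTop (𝓝 0))
    {ε : ℝ} (hε : 0 < ε) {η : ℝ≥0∞} (hη : η ≠ 0) :
    ∀ᶠ n in atTop, μ {ω | ε ≤ dist (gn n ω (Xn n ω)) (g (X ω))} ≤ μ Aᶜ + η := by
  set C := deviationSet Dn gn g A (ε / 2)
  have hC : Tendsto (fun k => μ (X ⁻¹' C k)) atTop (𝓝 0) :=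
    tendsto_measure_preimage_of_mem_nhdsWithin hX hXS deviationSet_antitone
      (fun _ _ hx hxC => deviationSet_mem_nhdsWithin hg hx hxC)
      fun x hx => (eventually_notMem_deviationSet (hloc x hx) (half_pos hε)).exists
  obtain ⟨k, hk⟩ := (hC.eventually_lt_const (ENNReal.half_pos hη)).exists
  filter_upwards [(hconv _ (Nat.one_div_pos_of_nat (n := k))).eventually_lt_const
    (ENNReal.half_pos hη), eventually_ge_atTop k] with n hn hkn
  have hsub : {ω | ε ≤ dist (gn n ω (Xn n ω)) (g (X ω))} ⊆
      Aᶜ ∪ ({ω | 1 / (k + 1) ≤ dist (Xn n ω) (X ω)} ∪ X ⁻¹' C k) := by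
    intro ω hω
    by_cases hA : ω ∈ A
    · by_cases hd : 1 / (k + 1) ≤ dist (Xn n ω) (X ω)
      · exact Or.inr (Or.inl hd)
      · refine Or.inr (Or.inr ⟨n, hkn, Xn n ω, hXn n ω, ?_, ω, hA, ?_⟩)
        · rw [dist_comm]
          exact not_le.1 hd
        · linarith [hω.out]
    · exact Or.inl hA
  calc μ {ω | ε ≤ dist (gn n ω (Xn n ω)) (g (X ω))}
      ≤ μ Aᶜ + (μ {ω | 1 / (k + 1) ≤ dist (Xn n ω) (X ω)} + μ (X ⁻¹' C k)) :=
        (measure_mono hsub).trans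
          ((measure_union_le _ _).trans (add_le_add_right (measure_union_le _ _) _))
    _ ≤ μ Aᶜ + (η / 2 + η / 2) := by gcongr
    _ = μ Aᶜ + η := by rw [ENNReal.add_halves]

end Probability

end

-- `μ s` for a non-measurable `s` is the outer measure, i.e. the outer probability `ℙ*(s)`.
/-- Extended continuous mapping theorem (convergence in outer probability),
for random maps `gₙ(ω) : 𝔻ₙ → 𝔼` converging almost uniformly to a fixed map
`g : 𝔻₀ → 𝔼` along convergent sequences: the limit `g` is continuous on
`𝔻₀ ∩ 𝔻_∞`, and if `Xₙ → X` in outer probability then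
`gₙ(Xₙ) → g(X)` in outer probability.  (In Mathlib a measure applied to an
arbitrary set is its outer measure, so `μ s` is the outer probability.) -/
theorem stmt10
    {Ω : Type*} [MeasurableSpace Ω] (μ : Measure Ω) [IsProbabilityMeasure μ]
    {𝔻 𝔼 : Type*} [MetricSpace 𝔻] [MetricSpace 𝔼]
    [MeasurableSpace 𝔻] [BorelSpace 𝔻]
    (D0 : Set 𝔻) (Dn : ℕ → Set 𝔻)
    (X : Ω → 𝔻) (hX : Measurable X)
    (hXsep : TopologicalSpace.IsSeparable (Set.range X))
    (hXD0 : ∀ ω, X ω ∈ D0)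
    (Xn : ℕ → Ω → 𝔻) (hXn : ∀ n ω, Xn n ω ∈ Dn n)
    -- Xₙ → X in outer probability
    (hconv : ∀ ε > (0 : ℝ),
      Tendsto (fun n => μ {ω | ε ≤ dist (Xn n ω) (X ω)}) atTop (𝓝 0))
    (gn : ℕ → Ω → 𝔻 → 𝔼) (g : 𝔻 → 𝔼)
    -- almost uniform convergence of the random maps gₙ along convergent sequences
    (hg : ∀ ε > (0 : ℝ), ∃ A : Set Ω, MeasurableSet A ∧
      1 - ENNReal.ofReal ε ≤ μ A ∧
      ∀ (x : ℕ → 𝔻) (x₀ : 𝔻), (∀ n, x n ∈ Dn n) →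
        Tendsto x atTop (𝓝 x₀) → x₀ ∈ D0 →
        ∀ δ > (0 : ℝ), ∀ᶠ n in atTop, ∀ ω ∈ A, dist (gn n ω (x n)) (g x₀) < δ) :
    ContinuousOn g (D0 ∩
      {x | ∃ xs : ℕ → 𝔻, (∀ n, xs n ∈ Dn n) ∧ Tendsto xs atTop (𝓝 x)}) ∧
    ∀ ε > (0 : ℝ),
      Tendsto (fun n => μ {ω | ε ≤ dist (gn n ω (Xn n ω)) (g (X ω))}) atTop (𝓝 0) := by
  set S := D0 ∩ seqLimits Dn
  have hXS : ∀ᵐ ω ∂μ, X ω ∈ S := by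
    filter_upwards [ae_mem_seqLimits hXsep hXn hconv] with ω hω using ⟨hXD0 ω, hω⟩
  have hgood : ∀ η : ℝ≥0∞, η ≠ 0 →
      ∃ A : Set Ω, μ Aᶜ ≤ η ∧ ∀ x ∈ S, TendstoUniformlyOnNear Dn gn g A x := by
    intro η hη
    obtain ⟨r, -, hr, hrη⟩ := ENNReal.lt_iff_exists_real_btwn.1 (pos_iff_ne_zero.2 hη)
    obtain ⟨A, hAm, hAμ, hA⟩ := hg r (ENNReal.ofReal_pos.1 hr)
    refine ⟨A, ?_, fun x hx =>
      tendstoUniformlyOnNear_of_tendsto_seq hx.2 fun w hw hwx => hA w x hw hwx hx.1⟩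
    rw [prob_compl_eq_one_sub hAm]
    exact (tsub_le_iff_tsub_le.1 hAμ).trans hrη.le
  have hcont : ContinuousOn g S := by
    obtain ⟨A, hAc, hA⟩ := hgood (1 / 2) (by norm_num)
    refine continuousOn_of_tendstoUniformlyOnNear (nonempty_iff_ne_empty.2 fun hA0 => ?_)
      (fun x hx => hx.2) hA
    rw [hA0, compl_empty, measure_univ] at hAc
    exact absurd hAc (by norm_num)
  refine ⟨hcont, fun ε hε => ENNReal.tendsto_nhds_zero.2 fun η hη => ?_⟩
  obtain ⟨A, hAc, hA⟩ := hgood (η / 2) (ENNReal.half_pos hη.ne').ne'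
  filter_upwards [eventually_measure_le_measure_compl_add hX hXS hcont hA hXn hconv hε
    (ENNReal.half_pos hη.ne').ne'] with n hn
  calc _ ≤ μ Aᶜ + η / 2 := hn
    _ ≤ η / 2 + η / 2 := by gcongr
    _ = η := ENNReal.add_halves η
end

section
/- Let U, V ~ Unif(0,1), Y_d ~ Unif(d, d+1) for d ∈ {0,1,2}, all mutually independent. Let Z = 1{U ≤ 0.5}, D₀ = 2·1{V ≤ 0.1} + 1{0.1 < V ≤ 0.5}, D₁ = 2·1{V ≤ 0.5} + 1{0.5 < V ≤ 0.6}, D = Σ_{z} 1{Z=z}·D_z, and Y = Σ_d 1{D=d}·Y_d. Then ℙ(Y ∈ [1,2], D ≥ 1 | Z = 1) − ℙ(Y ∈ [1,2], D ≥ 1 | Z = 0) = ℙ(D₀ = 0, D₁ = 1) − ℙ(D₀ = 1, D₁ = 2) < 0 (indeed it equals 0.1 − 0.4 = −0.3). -/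
open MeasureTheory ProbabilityTheory Set

/-!
Since `Y₁ ∈ (1,2)` and `Y₂ ∈ (2,3)` almost surely, the event `{Y ∈ [1,2], D ≥ 1}` is almost
surely `{D = 1}`. On `{Z = 1}` this is `{1/2 < V ≤ 3/5} = {D₀ = 0, D₁ = 1}`, on `{Z = 0}` it is
`{1/10 < V ≤ 1/2} = {D₀ = 1, D₁ = 2}`. As `Z` is a function of `U`, which is independent of `V`,
conditioning on `Z` does not change the probabilities `1/10` and `2/5` of these events.
-/

section UniformLaw

variable {Ω : Type*} [MeasurableSpace Ω] {μ : Measure Ω} {X : Ω → ℝ} {a b : ℝ}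

theorem measure_preimage_eq_volume_inter_of_map_eq_restrict (hX : Measurable X)
    (hXd : μ.map X = volume.restrict (Ioo a b)) {s : Set ℝ} (hs : MeasurableSet s) :
    μ (X ⁻¹' s) = volume (s ∩ Ioo a b) := by
  rw [← Measure.map_apply hX hs, hXd, Measure.restrict_apply hs]

theorem ae_mem_Ioo_of_map_eq_restrict (hX : Measurable X)
    (hXd : μ.map X = volume.restrict (Ioo a b)) : ∀ᵐ ω ∂μ, X ω ∈ Ioo a b :=
  (ae_map_iff hX.aemeasurable measurableSet_Ioo).mp (hXd ▸ ae_restrict_mem measurableSet_Ioo)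

theorem measure_preimage_Ioc_of_map_eq_restrict (hX : Measurable X)
    (hXd : μ.map X = volume.restrict (Ioo a b)) {c d : ℝ} (hac : a ≤ c) (hdb : d < b) :
    μ (X ⁻¹' Ioc c d) = ENNReal.ofReal (d - c) := by
  rw [measure_preimage_eq_volume_inter_of_map_eq_restrict hX hXd measurableSet_Ioc,
    inter_eq_left.mpr (Ioc_subset_Ioo_right hdb |>.trans (Ioo_subset_Ioo_left hac)),
    Real.volume_Ioc]

theorem measure_preimage_ne_zero_of_map_eq_restrict (hX : Measurable X)
    (hXd : μ.map X = volume.restrict (Ioo a b)) {s : Set ℝ} (hs : MeasurableSet s) {c d : ℝ}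
    (hcd : c < d) (hsub : Ioo c d ⊆ s ∩ Ioo a b) : μ (X ⁻¹' s) ≠ 0 := by
  rw [measure_preimage_eq_volume_inter_of_map_eq_restrict hX hXd hs]
  exact ((measure_mono hsub).trans_lt' (by simpa using hcd)).ne'

end UniformLaw

theorem ProbabilityTheory.IndepFun.cond_eq_of_inter_ae_eq {Ω α β : Type*} [MeasurableSpace Ω]
    [MeasurableSpace α] [MeasurableSpace β] {μ : Measure Ω} [IsFiniteMeasure μ]
    {U : Ω → α} {V : Ω → β} (hUV : IndepFun U V μ) (hU : Measurable U)
    {A : Set α} {B : Set β} (hA : MeasurableSet A) (hB : MeasurableSet B)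
    (hA0 : μ (U ⁻¹' A) ≠ 0) {E : Set Ω}
    (hE : (U ⁻¹' A ∩ E : Set Ω) =ᵐ[μ] (U ⁻¹' A ∩ V ⁻¹' B : Set Ω)) :
    μ[|U ⁻¹' A] E = μ (V ⁻¹' B) := by
  rw [cond_apply (hU hA), measure_congr hE, hUV.measure_inter_preimage_eq_mul _ _ hA hB,
    ENNReal.inv_mul_cancel_left hA0 (measure_ne_top _ _)]

theorem ite_mem_Icc_and_one_le_iff {d y₀ y₁ y₂ : ℝ} (hd : d = 0 ∨ d = 1 ∨ d = 2)
    (hy₁ : y₁ ∈ Ioo 1 2) (hy₂ : y₂ ∈ Ioo 2 3) :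
    ((if d = 0 then y₀ else if d = 1 then y₁ else y₂) ∈ Icc (1 : ℝ) 2 ∧ 1 ≤ d) ↔
      d = 1 := by
  rcases hd with rfl | rfl | rfl
  · norm_num
  · simpa using ⟨hy₁.1.le, hy₁.2.le⟩
  · norm_num
    exact fun h => by linarith [hy₂.1]

theorem stmt14_general
    {Ω : Type*} [MeasurableSpace Ω] (μ : Measure Ω) [IsProbabilityMeasure μ]
    (U V Y0 Y1 Y2 : Ω → ℝ)
    (hU : Measurable U) (hV : Measurable V)
    (hY1 : Measurable Y1) (hY2 : Measurable Y2)
    (hindep : iIndepFun ![U, V, Y0, Y1, Y2] μ)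
    (hUd : μ.map U = volume.restrict (Set.Ioo (0 : ℝ) 1))
    (hVd : μ.map V = volume.restrict (Set.Ioo (0 : ℝ) 1))
    (hY1d : μ.map Y1 = volume.restrict (Set.Ioo (1 : ℝ) 2))
    (hY2d : μ.map Y2 = volume.restrict (Set.Ioo (2 : ℝ) 3)) :
    let Z : Ω → ℝ := fun ω => if U ω ≤ 1 / 2 then 1 else 0
    let D0 : Ω → ℝ := fun ω => if V ω ≤ 1 / 10 then 2 else if V ω ≤ 1 / 2 then 1 else 0
    let D1 : Ω → ℝ := fun ω => if V ω ≤ 1 / 2 then 2 else if V ω ≤ 3 / 5 then 1 else 0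
    let D : Ω → ℝ := fun ω => if Z ω = 1 then D1 ω else D0 ω
    let Y : Ω → ℝ := fun ω =>
      if D ω = 0 then Y0 ω else if D ω = 1 then Y1 ω else Y2 ω
    ((μ[|Z ⁻¹' {1}] {ω | Y ω ∈ Set.Icc (1 : ℝ) 2 ∧ 1 ≤ D ω}).toReal
        - (μ[|Z ⁻¹' {0}] {ω | Y ω ∈ Set.Icc (1 : ℝ) 2 ∧ 1 ≤ D ω}).toReal
      = (μ {ω | D0 ω = 0 ∧ D1 ω = 1}).toReal - (μ {ω | D0 ω = 1 ∧ D1 ω = 2}).toReal) ∧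
    ((μ[|Z ⁻¹' {1}] {ω | Y ω ∈ Set.Icc (1 : ℝ) 2 ∧ 1 ≤ D ω}).toReal
        - (μ[|Z ⁻¹' {0}] {ω | Y ω ∈ Set.Icc (1 : ℝ) 2 ∧ 1 ≤ D ω}).toReal
      = -(3 / 10)) := by
  intro Z D0 D1 D Y
  have hUV : IndepFun U V μ := by simpa using hindep.indepFun (show (0 : Fin 5) ≠ 1 by decide)
  have hZ1 : Z ⁻¹' {1} = U ⁻¹' Iic (1 / 2) := by ext; simp [Z]
  have hZ0 : Z ⁻¹' {0} = U ⁻¹' Ioi (1 / 2) := by ext; simp [Z]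
  have hD01 : {ω | D0 ω = 0 ∧ D1 ω = 1} = V ⁻¹' Ioc (1 / 2) (3 / 5) := by
    ext; simp only [D0, D1, mem_ofPred_eq, mem_preimage, mem_Ioc]; grind
  have hD12 : {ω | D0 ω = 1 ∧ D1 ω = 2} = V ⁻¹' Ioc (1 / 10) (1 / 2) := by
    ext; simp only [D0, D1, mem_ofPred_eq, mem_preimage, mem_Ioc]; grind
  have hE : {ω | Y ω ∈ Icc (1 : ℝ) 2 ∧ 1 ≤ D ω} =ᵐ[μ] {ω | D ω = 1} := by
    filter_upwards [ae_mem_Ioo_of_map_eq_restrict hY1 hY1d,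
      ae_mem_Ioo_of_map_eq_restrict hY2 hY2d] with ω hy₁ hy₂
    exact propext (ite_mem_Icc_and_one_le_iff (by grind) hy₁ hy₂)
  have hE1 : U ⁻¹' Iic (1 / 2) ∩ {ω | D ω = 1} =
      U ⁻¹' Iic (1 / 2) ∩ V ⁻¹' Ioc (1 / 2) (3 / 5) := by
    ext; simp only [D, Z, D1, mem_inter_iff, mem_ofPred_eq, mem_preimage, mem_Iic, mem_Ioc]; grind
  have hE0 : U ⁻¹' Ioi (1 / 2) ∩ {ω | D ω = 1} =
      U ⁻¹' Ioi (1 / 2) ∩ V ⁻¹' Ioc (1 / 10) (1 / 2) := by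
    ext; simp only [D, Z, D0, mem_inter_iff, mem_ofPred_eq, mem_preimage, mem_Ioi, mem_Ioc]; grind
  have hU1 : μ (U ⁻¹' Iic (1 / 2)) ≠ 0 :=
    measure_preimage_ne_zero_of_map_eq_restrict hU hUd measurableSet_Iic (c := 0) (d := 1 / 2)
      (by norm_num) fun x hx => ⟨hx.2.le, hx.1, by linarith [hx.2]⟩
  have hU0 : μ (U ⁻¹' Ioi (1 / 2)) ≠ 0 :=
    measure_preimage_ne_zero_of_map_eq_restrict hU hUd measurableSet_Ioi (c := 1 / 2) (d := 1)
      (by norm_num) fun x hx => ⟨hx.1, by linarith [hx.1], hx.2⟩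
  have hc1 : μ[|Z ⁻¹' {1}] {ω | Y ω ∈ Icc (1 : ℝ) 2 ∧ 1 ≤ D ω} =
      μ {ω | D0 ω = 0 ∧ D1 ω = 1} := by
    rw [hZ1, hD01]
    exact hUV.cond_eq_of_inter_ae_eq hU measurableSet_Iic measurableSet_Ioc hU1
      (((ae_eq_refl _).inter hE).trans (.of_eq hE1))
  have hc0 : μ[|Z ⁻¹' {0}] {ω | Y ω ∈ Icc (1 : ℝ) 2 ∧ 1 ≤ D ω} =
      μ {ω | D0 ω = 1 ∧ D1 ω = 2} := by
    rw [hZ0, hD12]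
    exact hUV.cond_eq_of_inter_ae_eq hU measurableSet_Ioi measurableSet_Ioc hU0
      (((ae_eq_refl _).inter hE).trans (.of_eq hE0))
  refine ⟨by rw [hc1, hc0], ?_⟩
  rw [hc1, hc0, hD01, hD12,
    measure_preimage_Ioc_of_map_eq_restrict hV hVd (by norm_num) (by norm_num),
    measure_preimage_Ioc_of_map_eq_restrict hV hVd (by norm_num) (by norm_num)]
  norm_num

/-- A valid instrument for a multivalued treatment need not remain valid after
coarsening: with `U, V ~ Unif(0,1)`, `Y_d ~ Unif(d,d+1)` mutually independent,
`Z = 1{U ≤ 1/2}`, `D₀ = 2·1{V ≤ 0.1} + 1{0.1 < V ≤ 0.5}`,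
`D₁ = 2·1{V ≤ 0.5} + 1{0.5 < V ≤ 0.6}`, `D = Σ_z 1{Z=z}·D_z`,
`Y = Σ_d 1{D=d}·Y_d`, one has
`ℙ(Y ∈ [1,2], D ≥ 1 | Z=1) − ℙ(Y ∈ [1,2], D ≥ 1 | Z=0)
  = ℙ(D₀=0, D₁=1) − ℙ(D₀=1, D₁=2) = 0.1 − 0.4 = −0.3 < 0`. -/
theorem stmt14
    {Ω : Type*} [MeasurableSpace Ω] (μ : Measure Ω) [IsProbabilityMeasure μ]
    (U V Y0 Y1 Y2 : Ω → ℝ)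
    (hU : Measurable U) (hV : Measurable V)
    (hY0 : Measurable Y0) (hY1 : Measurable Y1) (hY2 : Measurable Y2)
    (hindep : iIndepFun ![U, V, Y0, Y1, Y2] μ)
    (hUd : μ.map U = volume.restrict (Set.Ioo (0 : ℝ) 1))
    (hVd : μ.map V = volume.restrict (Set.Ioo (0 : ℝ) 1))
    (hY0d : μ.map Y0 = volume.restrict (Set.Ioo (0 : ℝ) 1))
    (hY1d : μ.map Y1 = volume.restrict (Set.Ioo (1 : ℝ) 2))
    (hY2d : μ.map Y2 = volume.restrict (Set.Ioo (2 : ℝ) 3)) :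
    let Z : Ω → ℝ := fun ω => if U ω ≤ 1 / 2 then 1 else 0
    let D0 : Ω → ℝ := fun ω => if V ω ≤ 1 / 10 then 2 else if V ω ≤ 1 / 2 then 1 else 0
    let D1 : Ω → ℝ := fun ω => if V ω ≤ 1 / 2 then 2 else if V ω ≤ 3 / 5 then 1 else 0
    let D : Ω → ℝ := fun ω => if Z ω = 1 then D1 ω else D0 ω
    let Y : Ω → ℝ := fun ω =>
      if D ω = 0 then Y0 ω else if D ω = 1 then Y1 ω else Y2 ω
    ((μ[|Z ⁻¹' {1}] {ω | Y ω ∈ Set.Icc (1 : ℝ) 2 ∧ 1 ≤ D ω}).toReal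
        - (μ[|Z ⁻¹' {0}] {ω | Y ω ∈ Set.Icc (1 : ℝ) 2 ∧ 1 ≤ D ω}).toReal
      = (μ {ω | D0 ω = 0 ∧ D1 ω = 1}).toReal - (μ {ω | D0 ω = 1 ∧ D1 ω = 2}).toReal) ∧
    ((μ[|Z ⁻¹' {1}] {ω | Y ω ∈ Set.Icc (1 : ℝ) 2 ∧ 1 ≤ D ω}).toReal
        - (μ[|Z ⁻¹' {0}] {ω | Y ω ∈ Set.Icc (1 : ℝ) 2 ∧ 1 ≤ D ω}).toReal
      = -(3 / 10)) :=
  stmt14_general μ U V Y0 Y1 Y2 hU hV hY1 hY2 hindep hUd hVd hY1d hY2d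
end
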